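/- arXiv:2412.15170 — 2 statements merged into one kernel-verified Lean document; each statement's English description precedes it below -/
import Mathlib

section
/- Let H_2 ≤ H_1 ≤ F_p^n be subspaces with codim_{H_1}(H_2) = d, and let f : F_p^n → [0,1]. If a coset C_1 of H_1 is ε-regular for f (i.e., |E_{x∈C_1}(f(x) − α_1)e_p(r^T x)| ≤ ε for all r, where α_1 is the average of f on C_1), then for any coset C_2 of H_2 with C_2 ⊆ C_1: (i) C_2 is p^d·ε-regular for f, and (ii) the averages of f on C_1 and C_2 differ by at most p^d·ε. -/
open Matrix Pointwise
open scoped Classical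

/-- `e_p(t) = exp(2πit/p)`. -/
noncomputable def ep (p : ℕ) (t : ZMod p) : ℂ :=
  Complex.exp (2 * Real.pi * Complex.I * t.val / p)

/-- The average of `f` on the coset `c + H`. -/
noncomputable def cosetAvg {p n : ℕ} [Fact p.Prime]
    (H : Submodule (ZMod p) (Fin n → ZMod p)) (c : Fin n → ZMod p)
    (f : (Fin n → ZMod p) → ℝ) : ℝ :=
  (∑ h : H, f (c + h)) / (Fintype.card H)

/-- `f` is `ε`-regular (ε-uniform) on the coset `c + H`: every Fourier coefficient of
`f − (its average on the coset)` restricted to the coset is at most `ε`. -/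
noncomputable def epsRegular {p n : ℕ} [Fact p.Prime] (ε : ℝ)
    (H : Submodule (ZMod p) (Fin n → ZMod p)) (c : Fin n → ZMod p)
    (f : (Fin n → ZMod p) → ℝ) : Prop :=
  ∀ r : Fin n → ZMod p,
    ‖(∑ h : H, ((f (c + h) - cosetAvg H c f : ℝ) : ℂ) * ep p (r ⬝ᵥ (c + h))) /
      (Fintype.card H)‖ ≤ ε

/-! Expanding the indicator of `c₂ + H₂` in the characters `x ↦ e_p(s ⬝ᵥ x)`, `s ∈ H₂^⊥`, writes
every Fourier sum of `f - α₁` over `c₂ + H₂` as an average of Fourier sums of `f - α₁` over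
`c₁ + H₁`, each of norm at most `ε |H₁| = p^d ε |H₂|`. The sum at frequency `0` bounds `α₂ - α₁`.
Subtracting `α₂` instead of `α₁` leaves the sum at a frequency nontrivial on `H₂` unchanged, since
that character sums to zero over `c₂ + H₂`, and makes the others vanish. -/

section AddChar

variable {p : ℕ} [NeZero p]

lemma ep_eq_stdAddChar (t : ZMod p) : ep p t = ZMod.stdAddChar t := by
  rw [ep, ZMod.stdAddChar_apply, ZMod.toCircle_apply]

lemma ep_zero : ep p 0 = 1 := by
  rw [ep_eq_stdAddChar, AddChar.map_zero_eq_one]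

lemma ep_add (a b : ZMod p) : ep p (a + b) = ep p a * ep p b := by
  simp only [ep_eq_stdAddChar, AddChar.map_add_eq_mul]

lemma norm_ep (t : ZMod p) : ‖ep p t‖ = 1 := by
  rw [ep_eq_stdAddChar, ZMod.stdAddChar_apply, Circle.norm_coe]

lemma sum_ep_linearMap_eq_zero {M : Type*} [AddCommGroup M] [Module (ZMod p) M] [Fintype M]
    {φ : M →ₗ[ZMod p] ZMod p} (hφ : φ ≠ 0) : ∑ x, ep p (φ x) = 0 := by
  obtain ⟨x, hx⟩ := DFunLike.ne_iff.1 hφ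
  have hψ : (ZMod.stdAddChar (N := p)).compAddMonoidHom φ.toAddMonoidHom ≠ 1 := by
    refine AddChar.ne_one_iff.2 ⟨x, ?_⟩
    rw [AddChar.compAddMonoidHom_apply, ← AddChar.map_zero_eq_one (ZMod.stdAddChar (N := p))]
    exact ZMod.injective_stdAddChar.ne hx
  simp only [ep_eq_stdAddChar]
  exact AddChar.sum_eq_zero_of_ne_one hψ

end AddChar

section DotProduct

variable {p n : ℕ} [Fact p.Prime]

lemma sum_ep_dotProduct_eq_zero {K : Submodule (ZMod p) (Fin n → ZMod p)}
    {x : Fin n → ZMod p} (hx : ∃ s ∈ K, s ⬝ᵥ x ≠ 0) :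
    ∑ s : K, ep p ((s : Fin n → ZMod p) ⬝ᵥ x) = 0 := by
  obtain ⟨s, hsK, hsx⟩ := hx
  refine sum_ep_linearMap_eq_zero (φ := (dotProductEquiv (ZMod p) (Fin n)).flip x ∘ₗ K.subtype)
    fun h => hsx ?_
  simpa using LinearMap.congr_fun h ⟨s, hsK⟩

def dotAnnihilator (H : Submodule (ZMod p) (Fin n → ZMod p)) :
    Submodule (ZMod p) (Fin n → ZMod p) :=
  H.dualAnnihilator.comap (dotProductEquiv (ZMod p) (Fin n)).toLinearMap

lemma mem_dotAnnihilator {H : Submodule (ZMod p) (Fin n → ZMod p)} {s : Fin n → ZMod p} :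
    s ∈ dotAnnihilator H ↔ ∀ h ∈ H, s ⬝ᵥ h = 0 := by
  simp [dotAnnihilator, Submodule.mem_dualAnnihilator]

lemma exists_mem_dotAnnihilator_ne_zero {H : Submodule (ZMod p) (Fin n → ZMod p)}
    {x : Fin n → ZMod p} (hx : x ∉ H) : ∃ s ∈ dotAnnihilator H, s ⬝ᵥ x ≠ 0 := by
  obtain ⟨φ, hφx, hφH⟩ := H.exists_dual_map_eq_bot_of_notMem hx inferInstance
  have hφ : ∀ y, (dotProductEquiv (ZMod p) (Fin n)).symm φ ⬝ᵥ y = φ y := fun y => by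
    rw [← dotProductEquiv_apply_apply, LinearEquiv.apply_symm_apply]
  refine ⟨_, mem_dotAnnihilator.2 fun h hh => ?_, (hφ x).trans_ne hφx⟩
  rw [hφ, ← Submodule.mem_bot (ZMod p), ← hφH]
  exact Submodule.mem_map_of_mem hh

lemma sum_ep_dotAnnihilator (H : Submodule (ZMod p) (Fin n → ZMod p)) (x : Fin n → ZMod p) :
    ∑ s : dotAnnihilator H, ep p ((s : Fin n → ZMod p) ⬝ᵥ x) =
      if x ∈ H then (Fintype.card (dotAnnihilator H) : ℂ) else 0 := by
  split_ifs with hx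
  · simp [mem_dotAnnihilator.1 _ x hx, ep_zero]
  · exact sum_ep_dotProduct_eq_zero (exists_mem_dotAnnihilator_ne_zero hx)

end DotProduct

lemma sub_mem_of_vadd_subset {M : Type*} [AddCommGroup M] {S T : Set M} {c₁ c₂ x : M}
    (hsub : c₂ +ᵥ S ⊆ c₁ +ᵥ T) (hx : x - c₂ ∈ S) : x - c₁ ∈ T := by
  have hx' : x ∈ c₂ +ᵥ S :=
    Set.mem_vadd_set_iff_neg_vadd_mem.2 (by rwa [vadd_eq_add, neg_add_eq_sub])
  simpa only [vadd_eq_add, neg_add_eq_sub] using Set.mem_vadd_set_iff_neg_vadd_mem.1 (hsub hx')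

lemma card_eq_pow_mul_card {K V₁ V₂ : Type*} [Field K] [Fintype K] [AddCommGroup V₁]
    [Module K V₁] [Fintype V₁] [AddCommGroup V₂] [Module K V₂] [Fintype V₂] {d : ℕ}
    (h : Module.finrank K V₁ = Module.finrank K V₂ + d) :
    Fintype.card V₁ = Fintype.card K ^ d * Fintype.card V₂ := by
  rw [Module.card_eq_pow_finrank (K := K) (V := V₁),
    Module.card_eq_pow_finrank (K := K) (V := V₂), h, pow_add, mul_comm]

lemma sum_coset_eq_sum_ite {R M β : Type*} [Ring R] [AddCommGroup M] [Module R M] [Fintype M]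
    [AddCommMonoid β] (H : Submodule R M) (c : M) (F : M → β) :
    ∑ h : H, F (c + h) = ∑ x, if x - c ∈ H then F x else 0 := by
  rw [Fintype.sum_equiv (Equiv.subRight c) (fun x => if x - c ∈ H then F x else 0)
    (fun y => if y ∈ H then F (c + y) else 0)
    (fun x => by rw [Equiv.subRight_apply, add_sub_cancel]), ← Finset.sum_filter]
  exact (Finset.sum_subtype _ (by simp) fun y => F (c + y)).symm

section CosetFourierSum

variable {p n : ℕ}

noncomputable def cosetFourierSum [NeZero p] (H : Submodule (ZMod p) (Fin n → ZMod p))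
    (c : Fin n → ZMod p) (g : (Fin n → ZMod p) → ℂ) (r : Fin n → ZMod p) : ℂ :=
  ∑ h : H, g (c + h) * ep p (r ⬝ᵥ (c + h))

variable [Fact p.Prime]

lemma cosetFourierSum_eq_sum_ite (H : Submodule (ZMod p) (Fin n → ZMod p))
    (c : Fin n → ZMod p) (g : (Fin n → ZMod p) → ℂ) (r : Fin n → ZMod p) :
    cosetFourierSum H c g r = ∑ x, if x - c ∈ H then g x * ep p (r ⬝ᵥ x) else 0 :=
  sum_coset_eq_sum_ite H c fun x => g x * ep p (r ⬝ᵥ x)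

lemma card_dotAnnihilator_mul_cosetFourierSum {H₁ H₂ : Submodule (ZMod p) (Fin n → ZMod p)}
    {c₁ c₂ : Fin n → ZMod p} (hsub : ∀ x, x - c₂ ∈ H₂ → x - c₁ ∈ H₁)
    (g : (Fin n → ZMod p) → ℂ) (r : Fin n → ZMod p) :
    (Fintype.card (dotAnnihilator H₂) : ℂ) * cosetFourierSum H₂ c₂ g r =
      ∑ s : dotAnnihilator H₂,
        ep p (-((s : Fin n → ZMod p) ⬝ᵥ c₂)) *
          cosetFourierSum H₁ c₁ g (r + (s : Fin n → ZMod p)) := by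
  simp only [cosetFourierSum_eq_sum_ite, Finset.mul_sum]
  rw [Finset.sum_comm]
  refine Finset.sum_congr rfl fun x _ => ?_
  have hterm : ∀ s : dotAnnihilator H₂,
      ep p (-((s : Fin n → ZMod p) ⬝ᵥ c₂)) *
          (if x - c₁ ∈ H₁ then g x * ep p ((r + (s : Fin n → ZMod p)) ⬝ᵥ x) else 0) =
        (if x - c₁ ∈ H₁ then g x * ep p (r ⬝ᵥ x) else 0) *
          ep p ((s : Fin n → ZMod p) ⬝ᵥ (x - c₂)) := fun s => by
    split_ifs
    · rw [add_dotProduct, dotProduct_sub, sub_eq_neg_add, ep_add, ep_add]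
      ring
    · simp
  rw [Finset.sum_congr rfl fun s _ => hterm s, ← Finset.mul_sum, sum_ep_dotAnnihilator]
  by_cases hx : x - c₂ ∈ H₂
  · simp only [hx, hsub x hx, if_true]
    ring
  · simp only [hx, if_false, mul_zero]

lemma norm_cosetFourierSum_le_of_subcoset {H₁ H₂ : Submodule (ZMod p) (Fin n → ZMod p)}
    {c₁ c₂ : Fin n → ZMod p} (hsub : ∀ x, x - c₂ ∈ H₂ → x - c₁ ∈ H₁)
    {g : (Fin n → ZMod p) → ℂ} {B : ℝ} (hB : ∀ r, ‖cosetFourierSum H₁ c₁ g r‖ ≤ B)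
    (r : Fin n → ZMod p) : ‖cosetFourierSum H₂ c₂ g r‖ ≤ B := by
  set N := Fintype.card (dotAnnihilator H₂)
  have hN : (0 : ℝ) < N := by exact_mod_cast Fintype.card_pos
  refine le_of_mul_le_mul_left ?_ hN
  calc (N : ℝ) * ‖cosetFourierSum H₂ c₂ g r‖
      = ‖∑ s : dotAnnihilator H₂, ep p (-((s : Fin n → ZMod p) ⬝ᵥ c₂)) *
          cosetFourierSum H₁ c₁ g (r + (s : Fin n → ZMod p))‖ := by
        rw [← card_dotAnnihilator_mul_cosetFourierSum hsub, norm_mul, Complex.norm_natCast]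
    _ ≤ ∑ s : dotAnnihilator H₂, ‖ep p (-((s : Fin n → ZMod p) ⬝ᵥ c₂)) *
          cosetFourierSum H₁ c₁ g (r + (s : Fin n → ZMod p))‖ :=
        norm_sum_le _ _
    _ ≤ ∑ _s : dotAnnihilator H₂, B :=
        Finset.sum_le_sum fun s _ => by rw [norm_mul, norm_ep, one_mul]; exact hB _
    _ = N * B := by rw [Finset.sum_const, Finset.card_univ, nsmul_eq_mul]

lemma sum_sub_eq_card_mul_cosetAvg_sub (H : Submodule (ZMod p) (Fin n → ZMod p))
    (c : Fin n → ZMod p) (f : (Fin n → ZMod p) → ℝ) (a : ℝ) :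
    ∑ h : H, (f (c + h) - a) = Fintype.card H * (cosetAvg H c f - a) := by
  have hH : (Fintype.card H : ℝ) ≠ 0 := by exact_mod_cast Fintype.card_ne_zero
  rw [Finset.sum_sub_distrib, Finset.sum_const, Finset.card_univ, nsmul_eq_mul, cosetAvg,
    mul_sub, mul_div_cancel₀ _ hH]

lemma cosetFourierSum_zero (H : Submodule (ZMod p) (Fin n → ZMod p)) (c : Fin n → ZMod p)
    (f : (Fin n → ZMod p) → ℝ) (a : ℝ) :
    cosetFourierSum H c (fun x => ((f x - a : ℝ) : ℂ)) 0 =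
      ((Fintype.card H * (cosetAvg H c f - a) : ℝ) : ℂ) := by
  simp only [cosetFourierSum, zero_dotProduct, ep_zero, mul_one]
  rw [← sum_sub_eq_card_mul_cosetAvg_sub, Complex.ofReal_sum]

lemma norm_cosetFourierSum_sub_cosetAvg_le (H : Submodule (ZMod p) (Fin n → ZMod p))
    (c : Fin n → ZMod p) (f : (Fin n → ZMod p) → ℝ) (a : ℝ) (r : Fin n → ZMod p) :
    ‖cosetFourierSum H c (fun x => ((f x - cosetAvg H c f : ℝ) : ℂ)) r‖ ≤
      ‖cosetFourierSum H c (fun x => ((f x - a : ℝ) : ℂ)) r‖ := by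
  set α := cosetAvg H c f
  by_cases hr : ∀ h ∈ H, h ⬝ᵥ r = 0
  · have hconst : cosetFourierSum H c (fun x => ((f x - α : ℝ) : ℂ)) r =
        ep p (r ⬝ᵥ c) * ((∑ h : H, (f (c + h) - α) : ℝ) : ℂ) := by
      rw [cosetFourierSum, Complex.ofReal_sum, Finset.mul_sum]
      refine Finset.sum_congr rfl fun h _ => ?_
      rw [dotProduct_add, dotProduct_comm r h, hr h h.2, add_zero, mul_comm]
    rw [hconst, sum_sub_eq_card_mul_cosetAvg_sub, sub_self, mul_zero, Complex.ofReal_zero,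
      mul_zero, norm_zero]
    exact norm_nonneg _
  · have hsplit : cosetFourierSum H c (fun x => ((f x - α : ℝ) : ℂ)) r =
        cosetFourierSum H c (fun x => ((f x - a : ℝ) : ℂ)) r +
          ((a - α : ℝ) : ℂ) * ep p (r ⬝ᵥ c) * ∑ h : H, ep p ((h : Fin n → ZMod p) ⬝ᵥ r) := by
      simp only [cosetFourierSum, Finset.mul_sum, ← Finset.sum_add_distrib]
      refine Finset.sum_congr rfl fun h _ => ?_
      rw [dotProduct_add, ep_add, dotProduct_comm (h : Fin n → ZMod p) r]
      push_cast
      ring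
    obtain ⟨h, hh, hhr⟩ := not_forall₂.1 hr
    rw [hsplit, sum_ep_dotProduct_eq_zero ⟨h, hh, hhr⟩, mul_zero, add_zero]

lemma epsRegular_iff {ε : ℝ} {H : Submodule (ZMod p) (Fin n → ZMod p)} {c : Fin n → ZMod p}
    {f : (Fin n → ZMod p) → ℝ} :
    epsRegular ε H c f ↔
      ∀ r, ‖cosetFourierSum H c (fun x => ((f x - cosetAvg H c f : ℝ) : ℂ)) r‖ ≤
        ε * Fintype.card H := by
  have hH : (0 : ℝ) < Fintype.card H := by exact_mod_cast Fintype.card_pos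
  simp only [epsRegular, norm_div, Complex.norm_natCast, div_le_iff₀ hH]
  rfl

end CosetFourierSum

theorem regularity_inherited_by_subcosets_general {p n : ℕ} [Fact p.Prime] (d : ℕ)
    (H1 H2 : Submodule (ZMod p) (Fin n → ZMod p))
    (hcodim : Module.finrank (ZMod p) H1 = Module.finrank (ZMod p) H2 + d)
    (f : (Fin n → ZMod p) → ℝ)
    (ε : ℝ) (c1 c2 : Fin n → ZMod p)
    (hsub : c2 +ᵥ (H2 : Set (Fin n → ZMod p)) ⊆ c1 +ᵥ (H1 : Set (Fin n → ZMod p)))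
    (hreg : epsRegular ε H1 c1 f) :
    epsRegular ((p : ℝ) ^ d * ε) H2 c2 f ∧
      |cosetAvg H2 c2 f - cosetAvg H1 c1 f| ≤ (p : ℝ) ^ d * ε := by
  have hcard : (Fintype.card H1 : ℝ) = p ^ d * Fintype.card H2 := by
    exact_mod_cast (ZMod.card p ▸ card_eq_pow_mul_card hcodim)
  have hcoeff : ∀ r, ‖cosetFourierSum H2 c2 (fun x => ((f x - cosetAvg H1 c1 f : ℝ) : ℂ)) r‖ ≤
      p ^ d * ε * Fintype.card H2 := fun r => by
    have := norm_cosetFourierSum_le_of_subcoset (fun x => sub_mem_of_vadd_subset hsub)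
      (epsRegular_iff.1 hreg) r
    rwa [hcard, mul_left_comm, ← mul_assoc] at this
  refine ⟨epsRegular_iff.2 fun r =>
    (norm_cosetFourierSum_sub_cosetAvg_le _ _ _ _ r).trans (hcoeff r), ?_⟩
  have hH2 : (0 : ℝ) < Fintype.card H2 := by exact_mod_cast Fintype.card_pos
  have havg := hcoeff 0
  rw [cosetFourierSum_zero, Complex.norm_real, Real.norm_eq_abs, abs_mul, Nat.abs_cast,
    mul_comm] at havg
  exact le_of_mul_le_mul_right havg hH2

/-- regularity is inherited by subcosets, with the constant `p^d`, where `d`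
is the codimension of `H₂` inside `H₁`; likewise for the coset averages. -/
theorem regularity_inherited_by_subcosets {p n : ℕ} [Fact p.Prime] (d : ℕ)
    (H1 H2 : Submodule (ZMod p) (Fin n → ZMod p)) (hle : H2 ≤ H1)
    (hcodim : Module.finrank (ZMod p) H1 = Module.finrank (ZMod p) H2 + d)
    (f : (Fin n → ZMod p) → ℝ) (hf : ∀ x, f x ∈ Set.Icc (0 : ℝ) 1)
    (ε : ℝ) (c1 c2 : Fin n → ZMod p)
    (hsub : c2 +ᵥ (H2 : Set (Fin n → ZMod p)) ⊆ c1 +ᵥ (H1 : Set (Fin n → ZMod p)))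
    (hreg : epsRegular ε H1 c1 f) :
    epsRegular ((p : ℝ) ^ d * ε) H2 c2 f ∧
      |cosetAvg H2 c2 f - cosetAvg H1 c1 f| ≤ (p : ℝ) ^ d * ε :=
  regularity_inherited_by_subcosets_general d H1 H2 hcodim f ε c1 c2 hsub hreg
end

section
/- Fix ε > 0. There exists δ = δ(ε) > 0 such that for every subset A ⊆ F_p^n (n sufficiently large), at least one of the following holds: (i) |A| ≤ ε·p^n; (ii) |(A+A) ∩ A^c| > δ·p^n; (iii) there exists a subspace H ≤ F_p^n with |A Δ H| ≤ ε·p^n. -/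
open Pointwise

/-!
Write `k = #((A + A) \ A)` and suppose `2k < #A`. Since `#(A + A) ≤ #A + k`, every difference
`x ∈ A - A` has at least `#A - k > #A / 2` representations `x = a - b`, so any two differences
share a representation point; this makes `A - A` closed under addition, and double counting gives
`#(A - A) < 2 #A`. As some sum of two elements of `A` lies in `A`, the group `A - A` contains `A`,
and by pigeonhole each of its elements is then a sum of two elements of `A`. Hence `A + A = A - A`
is a subgroup containing `A`, and its symmetric difference with `A` is exactly `(A + A) \ A`.
-/

namespace Finset

variable {G : Type*} [AddCommGroup G] [DecidableEq G] {A : Finset G} {x y : G}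

theorem two_mul_card_le_card_inter_vadd_add_card_add (hx : x ∈ A - A) :
    2 * #A ≤ #(A ∩ (x +ᵥ A)) + #(A + A) := by
  obtain ⟨a, ha, b, hb, rfl⟩ := mem_sub.1 hx
  have htranslate : b +ᵥ (A ∪ ((a - b) +ᵥ A)) ⊆ A + A := by
    rw [vadd_finset_union, vadd_vadd, add_sub_cancel]
    exact union_subset (vadd_finset_subset_add hb) (vadd_finset_subset_add ha)
  have hunion := card_le_card htranslate
  have hsplit := card_union_add_card_inter A ((a - b) +ᵥ A)
  rw [card_vadd_finset] at hunion hsplit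
  omega

theorem neg_mem_sub_self (hx : x ∈ A - A) : -x ∈ A - A := by
  obtain ⟨a, ha, b, hb, rfl⟩ := mem_sub.1 hx
  simpa using sub_mem_sub hb ha

theorem add_mem_sub_self_of_card_lt_two_mul_card_inter_vadd
    (hA : ∀ z ∈ A - A, #A < 2 * #(A ∩ (z +ᵥ A))) (hx : x ∈ A - A) (hy : y ∈ A - A) :
    x + y ∈ A - A := by
  have hxA := hA x hx
  have hyA := hA (-y) (neg_mem_sub_self hy)
  obtain ⟨z, hz⟩ := inter_nonempty_of_card_lt_card_add_card inter_subset_left inter_subset_left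
    (by omega : #A < #(A ∩ (x +ᵥ A)) + #(A ∩ (-y +ᵥ A)))
  -- the common point `z` gives `x + y = (y + z) - (-x + z)`
  simp only [mem_inter, ← neg_vadd_mem_iff, vadd_eq_add, neg_neg] at hz
  exact mem_sub.2 ⟨y + z, hz.2.2, -x + z, hz.1.2, by abel⟩

theorem card_sub_self_mul_le_of_le_card_inter_vadd {m : ℕ}
    (hA : ∀ z ∈ A - A, m ≤ #(A ∩ (z +ᵥ A))) : #(A - A) * m ≤ #A * #A := by
  calc #(A - A) * m = #(A - A) • m := (smul_eq_mul _ _).symm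
    _ ≤ ∑ z ∈ A - A, #{ab ∈ A ×ˢ A | ab.1 - ab.2 = z} :=
        card_nsmul_le_sum _ _ _ fun z hz => by rw [card_sub_eq, ← card_inter_vadd]; exact hA z hz
    _ = #(A ×ˢ A) :=
        (card_eq_sum_card_fiberwise fun ab hab => sub_mem_sub (mem_product.1 hab).1
          (mem_product.1 hab).2).symm
    _ = #A * #A := card_product A A

theorem card_sub_le_card_inter_vadd_of_mem_sub (hx : x ∈ A - A) :
    #A - #((A + A) \ A) ≤ #(A ∩ (x +ᵥ A)) := by
  have := two_mul_card_le_card_inter_vadd_add_card_add hx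
  have : #(A + A) ≤ #((A + A) \ A) + #A := card_le_card_sdiff_add_card
  omega

theorem add_mem_sub_self_of_two_mul_card_sdiff_lt (h : 2 * #((A + A) \ A) < #A)
    (hx : x ∈ A - A) (hy : y ∈ A - A) : x + y ∈ A - A :=
  add_mem_sub_self_of_card_lt_two_mul_card_inter_vadd
    (fun _ hz => by have := card_sub_le_card_inter_vadd_of_mem_sub hz; omega) hx hy

theorem card_sub_self_lt_of_two_mul_card_sdiff_lt (h : 2 * #((A + A) \ A) < #A) :
    #(A - A) < 2 * #A := by
  set m := #A - #((A + A) \ A)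
  have hm : #A < 2 * m := by omega
  refine Nat.lt_of_mul_lt_mul_right (a := m) ?_
  calc #(A - A) * m ≤ #A * #A :=
        card_sub_self_mul_le_of_le_card_inter_vadd fun _ => card_sub_le_card_inter_vadd_of_mem_sub
    _ < 2 * m * #A := Nat.mul_lt_mul_of_pos_right hm (by omega)
    _ = 2 * #A * m := by ring

theorem subset_sub_self_of_two_mul_card_sdiff_lt (h : 2 * #((A + A) \ A) < #A) : A ⊆ A - A := by
  obtain ⟨c, hc⟩ : (A ∩ (A + A)).Nonempty := by
    by_contra! hempty
    have hescape : (A + A) \ A = A + A := sdiff_eq_self_of_disjoint <|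
      disjoint_iff_inter_eq_empty.2 (by rw [inter_comm, hempty])
    rw [hescape] at h
    have : #A ≤ #(A + A) := card_le_card_add_left (card_pos.1 (by omega))
    omega
  obtain ⟨hcA, hc⟩ := mem_inter.1 hc
  obtain ⟨u, hu, v, hv, rfl⟩ := mem_add.1 hc
  intro a ha
  -- `a = (a - v) + ((u + v) - u)`, a sum of two differences
  simpa using add_mem_sub_self_of_two_mul_card_sdiff_lt h (sub_mem_sub ha hv)
    (sub_mem_sub hcA hu)

theorem sub_self_eq_add_self_of_two_mul_card_sdiff_lt (h : 2 * #((A + A) \ A) < #A) :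
    A - A = A + A := by
  have hA := subset_sub_self_of_two_mul_card_sdiff_lt h
  refine Subset.antisymm (fun x hx => ?_) (add_subset_iff.2 fun a ha b hb =>
    add_mem_sub_self_of_two_mul_card_sdiff_lt h (hA ha) (hA hb))
  have hreflect : x +ᵥ -A ⊆ A - A := by
    intro z hz
    obtain ⟨w, hw, rfl⟩ := mem_vadd_finset.1 hz
    refine add_mem_sub_self_of_two_mul_card_sdiff_lt h hx ?_
    simpa using neg_mem_sub_self (hA (mem_neg'.1 hw))
  obtain ⟨z, hz⟩ := inter_nonempty_of_card_lt_card_add_card hA hreflect <| by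
    rw [card_vadd_finset, card_neg, ← two_mul]
    exact card_sub_self_lt_of_two_mul_card_sdiff_lt h
  rw [mem_inter, ← neg_vadd_mem_iff, vadd_eq_add, neg_add_eq_sub, ← neg_sub, mem_neg',
    neg_neg] at hz
  simpa using add_mem_add hz.1 hz.2

theorem exists_addSubgroup_coe_eq_add_self_of_two_mul_card_sdiff_lt
    (h : 2 * #((A + A) \ A) < #A) :
    A ⊆ A + A ∧ ∃ H : AddSubgroup G, (H : Set G) = ↑(A + A) := by
  have heq := sub_self_eq_add_self_of_two_mul_card_sdiff_lt h
  have hA : A ⊆ A + A := heq ▸ subset_sub_self_of_two_mul_card_sdiff_lt h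
  obtain ⟨a, ha⟩ : A.Nonempty := card_pos.1 (by omega)
  refine ⟨hA, ⟨⟨⟨↑(A + A), ?_⟩, ?_⟩, ?_⟩, rfl⟩
  · simp only [mem_coe, ← heq]
    exact add_mem_sub_self_of_two_mul_card_sdiff_lt h
  · simpa [← heq] using sub_mem_sub ha ha
  · simp only [mem_coe, ← heq]
    exact neg_mem_sub_self

end Finset

open Finset in
/-- for every `ε > 0` there is a `δ > 0` such that for every set
`A ⊆ F_p^n` (`n` sufficiently large), either `A` is small, or `(A+A) ∩ Aᶜ` is large, or
`A` is `ε`-close to a subspace. -/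
theorem small_sumset_escape_implies_close_to_subspace {p : ℕ} [Fact p.Prime]
    (ε : ℝ) (hε : 0 < ε) :
    ∃ δ : ℝ, 0 < δ ∧ ∃ N : ℕ, ∀ n ≥ N, ∀ A : Set (Fin n → ZMod p),
      ((A.ncard : ℝ) ≤ ε * (p : ℝ) ^ n) ∨
      ((((A + A) ∩ Aᶜ).ncard : ℝ) > δ * (p : ℝ) ^ n) ∨
      (∃ H : Submodule (ZMod p) (Fin n → ZMod p),
        ((symmDiff A (H : Set (Fin n → ZMod p))).ncard : ℝ) ≤ ε * (p : ℝ) ^ n) := by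
  classical
  refine ⟨ε / 2, half_pos hε, 0, fun n _ A => ?_⟩
  obtain ⟨A, rfl⟩ := (Set.toFinite A).exists_finset_coe
  have hescape : ((A : Set (Fin n → ZMod p)) + A) ∩ (↑A)ᶜ = ↑((A + A) \ A) := by
    rw [coe_sdiff, coe_add, Set.sdiff_eq]
  rw [hescape, Set.ncard_coe_finset, Set.ncard_coe_finset]
  by_cases hsmall : (#A : ℝ) ≤ ε * p ^ n
  · exact Or.inl hsmall
  by_cases hescapes : ε / 2 * p ^ n < #((A + A) \ A)
  · exact Or.inr (Or.inl hescapes)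
  have h : 2 * #((A + A) \ A) < #A := by
    exact_mod_cast (by linarith : (2 * #((A + A) \ A) : ℝ) < #A)
  obtain ⟨hA, H, hH⟩ := exists_addSubgroup_coe_eq_add_self_of_two_mul_card_sdiff_lt h
  refine Or.inr (Or.inr ⟨AddSubgroup.toZModSubmodule p H, ?_⟩)
  rw [AddSubgroup.coe_toZModSubmodule, hH, symmDiff_of_le (coe_subset.2 hA), ← coe_sdiff,
    Set.ncard_coe_finset]
  have : (0 : ℝ) ≤ p ^ n := by positivity
  linarith
end
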